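/- arXiv:2110.02793 — 2 statements merged into one kernel-verified Lean document; each statement's English description precedes it below -/
import Mathlib

section
/- Let Q : S → A₁ × ⋯ × Aₕ → ℝ be a function and for each prefix of agents 1..j define Q^{1:j}(s, a¹,…,aʲ) as the expectation of Q over the remaining coordinates drawn independently from policies π^{j+1},…,π^h, with Q^{1:0}(s) = V(s) the full expectation. Define the multi-agent advantage A^{j}(s, a^{1:j-1}, aʲ) = Q^{1:j}(s, a^{1:j}) − Q^{1:j-1}(s, a^{1:j-1}) and A^{1:h}(s, a^{1:h}) = Q^{1:h}(s,a^{1:h}) − V(s). Then for every state s and joint action a^{1:h}, A^{1:h}(s, a^{1:h}) = ∑_{j=1}^{h} A^{j}(s, a^{1:j-1}, aʲ) (multi-agent advantage decomposition). -/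
open Finset

/-- Expectation of `Q` over coordinates `i ≥ j` drawn from the policies `π`,
with coordinates `i < j` fixed to the given joint action `a`.  In particular
`Qpref π Q s a 0` is the full expectation `V(s)` and `Qpref π Q s a h = Q s a`. -/
noncomputable def Qpref {S : Type*} {h : ℕ} {A : Fin h → Type*}
    [∀ i, Fintype (A i)] [∀ i, DecidableEq (A i)]
    (π : ∀ i : Fin h, S → A i → ℝ) (Q : S → (∀ i, A i) → ℝ)
    (s : S) (a : ∀ i, A i) (j : ℕ) : ℝ :=
  ∑ b : ∀ i, A i,
    (∏ i : Fin h, if j ≤ (i : ℕ) then π i s (b i) else (if b i = a i then 1 else 0)) *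
      Q s b

/-- Multi-agent advantage decomposition: `A^{1:h}(s,a^{1:h}) = ∑_{j=1}^h A^j(s,a^{1:j-1},a^j)`. -/
theorem multi_agent_advantage_decomposition {S : Type*} {h : ℕ} {A : Fin h → Type*}
    [∀ i, Fintype (A i)] [∀ i, DecidableEq (A i)]
    (π : ∀ i : Fin h, S → A i → ℝ)
    (hπ : ∀ i s, (∀ x, 0 ≤ π i s x) ∧ ∑ x, π i s x = 1)
    (Q : S → (∀ i, A i) → ℝ) (s : S) (a : ∀ i, A i) :
    Qpref π Q s a h - Qpref π Q s a 0 =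
      ∑ j ∈ Finset.range h, (Qpref π Q s a (j + 1) - Qpref π Q s a j) := by
  exact (Finset.sum_range_sub (fun j => Qpref π Q s a j) h).symm
end

section
/- Consider a finite-state, finite-action Markov reward process with discount γ ∈ [0,1), reward r : S × A × S → ℝ, joint policy π̃, value function V_π of another policy π (bounded), and advantage A_π(s, a) = E_{s′ ∼ P(·|s,a)}[ r(s,a,s′) + γ V_π(s′) ] − V_π(s). Then the expected discounted sum of advantages of π evaluated along trajectories of π̃ telescopes to the performance difference: E_{τ ∼ π̃}[ ∑_{t=0}^{∞} γᵗ A_π(s_t, a_t) ] = J(π̃) − J(π), where J(π) = E[ ∑_{t=0}^{∞} γᵗ r(s_t, a_t, s_{t+1}) ] under π from initial distribution ρ₀, and both expectations start from the same ρ₀. -/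
/-- Distribution of the state at time `t` when following policy `pol` in kernel
`P` from initial distribution `ρ`. -/
noncomputable def stateDist {S A : Type*} [Fintype S] [Fintype A]
    (P : S → A → S → ℝ) (pol : S → A → ℝ) (ρ : S → ℝ) : ℕ → S → ℝ
  | 0 => ρ
  | (t + 1) => fun s' => ∑ s, ∑ a, stateDist P pol ρ t s * pol s a * P s a s'

lemma stateDist_nonneg {S A : Type*} [Fintype S] [Fintype A]
    (P : S → A → S → ℝ) (pol : S → A → ℝ) (ρ : S → ℝ)
    (hP : ∀ s a s', 0 ≤ P s a s') (hpol : ∀ s a, 0 ≤ pol s a)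
    (hρ : ∀ s, 0 ≤ ρ s) : ∀ t s, 0 ≤ stateDist P pol ρ t s := by
  intro t
  induction t with
  | zero => exact hρ
  | succ t ih =>
    intro s'
    simp only [stateDist]
    refine Finset.sum_nonneg fun s _ => Finset.sum_nonneg fun a _ => ?_
    exact mul_nonneg (mul_nonneg (ih s) (hpol s a)) (hP s a s')

lemma stateDist_sum_one {S A : Type*} [Fintype S] [Fintype A]
    (P : S → A → S → ℝ) (pol : S → A → ℝ) (ρ : S → ℝ)
    (hP : ∀ s a, ∑ s', P s a s' = 1) (hpol : ∀ s, ∑ a, pol s a = 1)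
    (hρ : ∑ s, ρ s = 1) : ∀ t, ∑ s, stateDist P pol ρ t s = 1 := by
  intro t
  induction t with
  | zero => exact hρ
  | succ t ih =>
    simp only [stateDist]
    rw [Finset.sum_comm]
    calc ∑ s, ∑ s', ∑ a, stateDist P pol ρ t s * pol s a * P s a s'
        = ∑ s, ∑ a, ∑ s', stateDist P pol ρ t s * pol s a * P s a s' := by
          exact Finset.sum_congr rfl fun s _ => Finset.sum_comm

      _ = ∑ s, ∑ a, stateDist P pol ρ t s * pol s a := by
          refine Finset.sum_congr rfl fun s _ => Finset.sum_congr rfl fun a _ => ?_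
          rw [← Finset.mul_sum, hP s a, mul_one]
      _ = ∑ s, stateDist P pol ρ t s := by
          refine Finset.sum_congr rfl fun s _ => ?_
          rw [← Finset.mul_sum, hpol s, mul_one]
      _ = 1 := ih

/-- Performance difference lemma: the expected discounted sum of the advantages
of `π` along trajectories of `π̃` equals `J(π̃) - J(π)`, where `V` is the value
function of `π` (characterized by its Bellman equation) and `J(π) = E_{ρ₀}[V]`. -/
theorem performance_difference {S A : Type*} [Fintype S] [Fintype A]
    (P : S → A → S → ℝ) (r : S → A → S → ℝ) (π πtilde : S → A → ℝ)
    (ρ₀ : S → ℝ) (γ : ℝ) (V : S → ℝ)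
    (hP : ∀ s a, (∀ s', 0 ≤ P s a s') ∧ ∑ s', P s a s' = 1)
    (hπ : ∀ s, (∀ a, 0 ≤ π s a) ∧ ∑ a, π s a = 1)
    (hπt : ∀ s, (∀ a, 0 ≤ πtilde s a) ∧ ∑ a, πtilde s a = 1)
    (hρ : (∀ s, 0 ≤ ρ₀ s) ∧ ∑ s, ρ₀ s = 1)
    (hγ0 : 0 ≤ γ) (hγ1 : γ < 1)
    (hV : ∀ s, V s = ∑ a, π s a * ∑ s', P s a s' * (r s a s' + γ * V s')) :
    (∑' t : ℕ, γ ^ t * ∑ s, stateDist P πtilde ρ₀ t s *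
        ∑ a, πtilde s a *
          ((∑ s', P s a s' * (r s a s' + γ * V s')) - V s)) =
      (∑' t : ℕ, γ ^ t * ∑ s, stateDist P πtilde ρ₀ t s *
          ∑ a, πtilde s a * ∑ s', P s a s' * r s a s') -
        ∑ s, ρ₀ s * V s := by
  set d := stateDist P πtilde ρ₀ with hdDef
  have hd0 : ∀ t s, 0 ≤ d t s :=
    stateDist_nonneg P πtilde ρ₀ (fun s a => (hP s a).1) (fun s => (hπt s).1) hρ.1
  have hd1 : ∀ t, ∑ s, d t s = 1 :=
    stateDist_sum_one P πtilde ρ₀ (fun s a => (hP s a).2) (fun s => (hπt s).2) hρ.2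
  have hdle : ∀ t s, d t s ≤ 1 := by
    intro t s
    calc d t s ≤ ∑ s', d t s' :=
          Finset.single_le_sum (fun s' _ => hd0 t s') (Finset.mem_univ s)
      _ = 1 := hd1 t
  set W : ℕ → ℝ := fun t => ∑ s, d t s * V s with hWdef
  set R : ℕ → ℝ := fun t =>
    ∑ s, d t s * ∑ a, πtilde s a * ∑ s', P s a s' * r s a s' with hRdef
  set f : ℕ → ℝ := fun t => γ ^ t * ∑ s, d t s *
      ∑ a, πtilde s a * ((∑ s', P s a s' * (r s a s' + γ * V s')) - V s) with hfdef
  set g : ℕ → ℝ := fun t => γ ^ t * R t with hgdef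
  -- key pointwise identity
  have hWsucc : ∀ t, W (t + 1) = ∑ s, d t s * ∑ a, πtilde s a * ∑ s', P s a s' * V s' := by
    intro t
    show ∑ s', (∑ s, ∑ a, d t s * πtilde s a * P s a s') * V s' = _
    simp only [Finset.sum_mul, Finset.mul_sum]
    rw [Finset.sum_comm]
    refine Finset.sum_congr rfl fun s _ => ?_
    rw [Finset.sum_comm]
    exact Finset.sum_congr rfl fun a _ => Finset.sum_congr rfl fun s' _ => by ring
  have hkey : ∀ t, f t = g t + (γ ^ (t + 1) * W (t + 1) - γ ^ t * W t) := by
    intro t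
    have hinner : (∑ s, d t s *
        ∑ a, πtilde s a * ((∑ s', P s a s' * (r s a s' + γ * V s')) - V s))
        = R t + γ * W (t + 1) - W t := by
      have h1 : ∀ s, ∑ a, πtilde s a * ((∑ s', P s a s' * (r s a s' + γ * V s')) - V s)
          = (∑ a, πtilde s a * ∑ s', P s a s' * r s a s')
            + γ * (∑ a, πtilde s a * ∑ s', P s a s' * V s') - V s := by
        intro s
        have : ∀ a, πtilde s a * ((∑ s', P s a s' * (r s a s' + γ * V s')) - V s)
            = πtilde s a * ∑ s', P s a s' * r s a s'
              + γ * (πtilde s a * ∑ s', P s a s' * V s') - πtilde s a * V s := by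
          intro a
          have hsplit : (∑ s', P s a s' * (r s a s' + γ * V s'))
              = (∑ s', P s a s' * r s a s') + γ * ∑ s', P s a s' * V s' := by
            rw [Finset.mul_sum, ← Finset.sum_add_distrib]
            refine Finset.sum_congr rfl fun s' _ => ?_
            ring
          rw [hsplit]; ring
        rw [Finset.sum_congr rfl fun a _ => this a, Finset.sum_sub_distrib,
          Finset.sum_add_distrib, ← Finset.mul_sum, ← Finset.sum_mul, (hπt s).2, one_mul]
      rw [Finset.sum_congr rfl fun s _ => congrArg (d t s * ·) (h1 s)]
      rw [hWsucc t]
      simp only [hRdef, hWdef]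
      rw [Finset.mul_sum, ← Finset.sum_add_distrib, ← Finset.sum_sub_distrib]
      refine Finset.sum_congr rfl fun s _ => ?_
      ring
    simp only [hfdef, hgdef, hinner]
    ring
  -- bounds and summability
  have habsW : ∀ t, |W t| ≤ ∑ s, |V s| := by
    intro t
    calc |W t| ≤ ∑ s, |d t s * V s| := Finset.abs_sum_le_sum_abs _ _
      _ ≤ ∑ s, |V s| := by
        refine Finset.sum_le_sum fun s _ => ?_
        rw [abs_mul, abs_of_nonneg (hd0 t s)]
        nlinarith [abs_nonneg (V s), hdle t s, hd0 t s]
  have hboundR : ∀ t, |R t| ≤ ∑ s, |∑ a, πtilde s a * ∑ s', P s a s' * r s a s'| := by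
    intro t
    calc |R t| ≤ ∑ s, |d t s * ∑ a, πtilde s a * ∑ s', P s a s' * r s a s'| :=
          Finset.abs_sum_le_sum_abs _ _
      _ ≤ _ := by
        refine Finset.sum_le_sum fun s _ => ?_
        rw [abs_mul, abs_of_nonneg (hd0 t s)]
        nlinarith [abs_nonneg (∑ a, πtilde s a * ∑ s', P s a s' * r s a s'),
          hdle t s, hd0 t s]
  have hgeom : Summable fun t : ℕ => γ ^ t := summable_geometric_of_lt_one hγ0 hγ1
  have habsγ : |γ| = γ := abs_of_nonneg hγ0
  have hSg : Summable g := by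
    refine Summable.of_abs (Summable.of_nonneg_of_le (fun t => abs_nonneg _)
      (fun t => ?_) ((hgeom.mul_right (∑ s, |∑ a, πtilde s a * ∑ s', P s a s' * r s a s'|))))
    rw [hgdef, abs_mul, abs_pow, habsγ]
    exact mul_le_mul_of_nonneg_left (hboundR t) (pow_nonneg hγ0 t)
  have hSf : Summable f := by
    have hboundF : ∀ t, |∑ s, d t s *
        ∑ a, πtilde s a * ((∑ s', P s a s' * (r s a s' + γ * V s')) - V s)|
        ≤ ∑ s, |∑ a, πtilde s a * ((∑ s', P s a s' * (r s a s' + γ * V s')) - V s)| := by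
      intro t
      calc _ ≤ ∑ s, |d t s *
            ∑ a, πtilde s a * ((∑ s', P s a s' * (r s a s' + γ * V s')) - V s)| :=
            Finset.abs_sum_le_sum_abs _ _
        _ ≤ _ := by
          refine Finset.sum_le_sum fun s _ => ?_
          rw [abs_mul, abs_of_nonneg (hd0 t s)]
          nlinarith [abs_nonneg (∑ a, πtilde s a *
            ((∑ s', P s a s' * (r s a s' + γ * V s')) - V s)), hdle t s, hd0 t s]
    refine Summable.of_abs (Summable.of_nonneg_of_le (fun t => abs_nonneg _)
      (fun t => ?_) ((hgeom.mul_right (∑ s, |∑ a, πtilde s a *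
        ((∑ s', P s a s' * (r s a s' + γ * V s')) - V s)|))))
    rw [hfdef, abs_mul, abs_pow, habsγ]
    exact mul_le_mul_of_nonneg_left (hboundF t) (pow_nonneg hγ0 t)
  -- partial sums
  have hpartial : ∀ N, ∑ t ∈ Finset.range N, f t
      = (∑ t ∈ Finset.range N, g t) + (γ ^ N * W N - γ ^ 0 * W 0) := by
    intro N
    rw [Finset.sum_congr rfl fun t _ => hkey t, Finset.sum_add_distrib,
      Finset.sum_range_sub (fun t => γ ^ t * W t)]
  have hW0 : γ ^ 0 * W 0 = ∑ s, ρ₀ s * V s := by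
    simp [hWdef, hdDef, stateDist]
  have htendW : Filter.Tendsto (fun N => γ ^ N * W N) Filter.atTop (nhds 0) := by
    have h0 : Filter.Tendsto (fun N : ℕ => γ ^ N * (∑ s, |V s|)) Filter.atTop (nhds 0) := by
      simpa using (tendsto_pow_atTop_nhds_zero_of_lt_one hγ0 hγ1).mul_const (∑ s, |V s|)
    refine squeeze_zero_norm (fun N => ?_) h0
    rw [Real.norm_eq_abs, abs_mul, abs_pow, habsγ]
    exact mul_le_mul_of_nonneg_left (habsW N) (pow_nonneg hγ0 N)
  have htendf : Filter.Tendsto (fun N => ∑ t ∈ Finset.range N, f t) Filter.atTop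
      (nhds ((∑' t, g t) + (0 - γ ^ 0 * W 0))) := by
    simp only [hpartial]
    exact (hSg.hasSum.tendsto_sum_nat).add (htendW.sub tendsto_const_nhds)
  have := tendsto_nhds_unique hSf.hasSum.tendsto_sum_nat htendf
  rw [this, hW0]
  ring
end
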